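/- Let r ≥ 1 be an ODD integer. Then for any n ≥ r, any A > 0 and any λ ∈ [0,1], there exists f ∈ C^r which is identically 0 on [-1, -1/2] and nonnegative on I, such that for every polynomial P_n of degree ≤ n which is nonnegative on (λ - 1/n, λ) and satisfies P_n^(i)(λ) = f^(i)(λ) for all 0 ≤ i ≤ r, one has ‖f - P_n‖ > A ‖f^(r)‖. Hence positive polynomial approximation with Hermite interpolation of full order r at λ is impossible for odd r. -/

import Mathlib

/-!
Fix a small `δ > 0` and take `f x = (x - λ + δ)₊ ^ (r+1) - (x - λ)₊ ^ (r+1)`. It is `C^r`,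
nonnegative, vanishes left of `λ - δ`, has `‖f^(r)‖ ≤ (r+1)! δ`, and its `r`-jet at `λ` is that of
`T x = (x - λ + δ) ^ (r+1) - (x - λ) ^ (r+1)`. An interpolating `P` is therefore
`T + (x - λ) ^ (r+1) Q` with `deg Q < n`. As `r + 1` is even, `P (λ - 2δ) ≥ 0` forces
`Q (λ - 2δ) ≥ 1/2`. On the other hand, if `‖f - P‖ ≤ A ‖f^(r)‖ = O(δ)`, then `P`, and hence `Q`,
is `O(δ)` at the `n` points `λ - 2δ - j/(2n)`, where `f = 0`; the vanishing `n`-th forward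
difference of `Q` bounds `Q (λ - 2δ)` by `2^n` times that, which is absurd for small `δ`.
-/

/-- The sup norm of `g` on `[a,b]`. -/
noncomputable def supNorm (g : ℝ → ℝ) (a b : ℝ) : ℝ :=
  sSup ((fun x => |g x|) '' Set.Icc a b)

open Set

lemma abs_le_supNorm {g : ℝ → ℝ} {a b x : ℝ} (hg : ContinuousOn g (Icc a b)) (hx : x ∈ Icc a b) :
    |g x| ≤ supNorm g a b :=
  le_csSup (isCompact_Icc.image_of_continuousOn hg.abs).bddAbove ⟨x, hx, rfl⟩

lemma supNorm_le {g : ℝ → ℝ} {a b C : ℝ} (hC : 0 ≤ C) (h : ∀ x ∈ Icc a b, |g x| ≤ C) :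
    supNorm g a b ≤ C :=
  Real.sSup_le (by rintro _ ⟨x, hx, rfl⟩; exact h x hx) hC

noncomputable def truncPow (k : ℕ) (t : ℝ) : ℝ := max t 0 ^ k

namespace truncPow

variable {k : ℕ} {t : ℝ}

lemma of_nonpos (hk : k ≠ 0) (ht : t ≤ 0) : truncPow k t = 0 := by
  rw [truncPow, max_eq_right ht, zero_pow hk]

lemma of_nonneg (ht : 0 ≤ t) : truncPow k t = t ^ k := by
  rw [truncPow, max_eq_left ht]

lemma monotone (k : ℕ) : Monotone (truncPow k) := fun _ _ h =>
  pow_le_pow_left₀ (le_max_right _ _) (max_le_max_right 0 h) k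

lemma continuous (k : ℕ) : Continuous (truncPow k) := by
  unfold truncPow; fun_prop

lemma hasDerivAt_succ (hk : k ≠ 0) (t : ℝ) :
    HasDerivAt (truncPow (k + 1)) ((k + 1) * truncPow k t) t := by
  have hpow : ∀ t, HasDerivAt (fun s : ℝ => s ^ (k + 1)) ((k + 1) * t ^ k) t := fun t => by
    simpa using hasDerivAt_pow (k + 1) t
  rcases lt_trichotomy t 0 with ht | rfl | ht
  · rw [of_nonpos hk ht.le, mul_zero]
    exact (hasDerivAt_const t 0).congr_of_eventuallyEq <|
      Filter.eventually_of_mem (Iio_mem_nhds ht) fun s hs => of_nonpos k.succ_ne_zero (le_of_lt hs)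
  · have hleft : HasDerivWithinAt (truncPow (k + 1)) 0 (Iic 0) 0 :=
      (hasDerivWithinAt_const _ _ 0).congr (fun s hs => of_nonpos k.succ_ne_zero hs)
        (of_nonpos k.succ_ne_zero le_rfl)
    have hright : HasDerivWithinAt (truncPow (k + 1)) 0 (Ici 0) 0 := by
      have := ((hpow 0).hasDerivWithinAt (s := Ici 0)).congr (fun s hs => of_nonneg hs)
        (of_nonneg le_rfl)
      rwa [zero_pow hk, mul_zero] at this
    rw [of_nonpos hk le_rfl, mul_zero, ← hasDerivWithinAt_univ, ← Iic_union_Ici]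
    exact hleft.union hright
  · rw [of_nonneg ht.le]
    exact (hpow t).congr_of_eventuallyEq <|
      Filter.eventually_of_mem (Ioi_mem_nhds ht) fun s hs => of_nonneg (le_of_lt hs)

lemma iteratedDeriv_eq {i : ℕ} (hi : i < k) :
    iteratedDeriv i (truncPow k) = fun t => k.descFactorial i * truncPow (k - i) t := by
  induction i with
  | zero => ext; simp
  | succ i ih =>
    obtain ⟨j, hj⟩ : ∃ j, k - i = j + 1 + 1 := ⟨k - i - 2, by omega⟩
    ext t
    rw [iteratedDeriv_succ, ih (by omega), hj,
      ((hasDerivAt_succ j.succ_ne_zero t).const_mul _).deriv,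
      show k - (i + 1) = j + 1 by omega, Nat.descFactorial_succ, hj]
    push_cast
    ring

lemma contDiff {m : ℕ} (hm : m < k) : ContDiff ℝ m (truncPow k) := by
  refine contDiff_iff_iteratedDeriv.2 ⟨fun i hi => ?_, fun i hi => ?_⟩
  · have hi : i ≤ m := by exact_mod_cast hi
    rw [iteratedDeriv_eq (by omega)]
    exact continuous_const.mul (continuous _)
  · have hi : i < m := by exact_mod_cast hi
    obtain ⟨j, hj⟩ : ∃ j, k - i = j + 1 + 1 := ⟨k - i - 2, by omega⟩
    rw [iteratedDeriv_eq (by omega), hj]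
    exact fun t => ((hasDerivAt_succ j.succ_ne_zero t).const_mul _).differentiableAt

end truncPow

noncomputable def truncPowDiff (k : ℕ) (a b x : ℝ) : ℝ := truncPow k (x - a) - truncPow k (x - b)

namespace truncPowDiff

variable {k : ℕ} {a b x : ℝ}

lemma contDiff {m : ℕ} (hm : m < k) : ContDiff ℝ m (truncPowDiff k a b) :=
  ((truncPow.contDiff hm).comp (contDiff_id.sub contDiff_const)).sub
    ((truncPow.contDiff hm).comp (contDiff_id.sub contDiff_const))

lemma eq_zero (hk : k ≠ 0) (ha : x ≤ a) (hb : x ≤ b) : truncPowDiff k a b x = 0 := by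
  rw [truncPowDiff, truncPow.of_nonpos hk (by linarith), truncPow.of_nonpos hk (by linarith),
    sub_zero]

lemma nonneg (hab : a ≤ b) : 0 ≤ truncPowDiff k a b x :=
  sub_nonneg.2 <| truncPow.monotone k <| by linarith

lemma abs_one_le : |truncPowDiff 1 a b x| ≤ |b - a| := by
  simpa [truncPowDiff, truncPow] using abs_max_sub_max_le_abs (x - a) (x - b) 0

lemma iteratedDeriv_eq {i : ℕ} (hi : i < k) :
    iteratedDeriv i (truncPowDiff k a b) =
      fun x => k.descFactorial i * truncPowDiff (k - i) a b x := by
  ext x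
  have hd : ∀ c, ContDiffAt ℝ i (fun y => truncPow k (y - c)) x := fun c =>
    ((truncPow.contDiff hi).comp (contDiff_id.sub contDiff_const)).contDiffAt
  change iteratedDeriv i (fun y => truncPow k (y - a) - truncPow k (y - b)) x = _
  rw [iteratedDeriv_fun_sub (hd a) (hd b)]
  simp [iteratedDeriv_comp_sub_const, truncPow.iteratedDeriv_eq hi, truncPowDiff, mul_sub]

lemma iteratedDerivWithin_eq {s : Set ℝ} (hs : UniqueDiffOn ℝ s) (hx : x ∈ s) {i : ℕ}
    (hi : i < k) :
    iteratedDerivWithin i (truncPowDiff k a b) s x =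
      k.descFactorial i * truncPowDiff (k - i) a b x := by
  rw [iteratedDerivWithin_eq_iteratedDeriv hs (contDiff hi).contDiffAt hx, iteratedDeriv_eq hi]

lemma abs_iteratedDerivWithin_le {s : Set ℝ} (hs : UniqueDiffOn ℝ s) (hx : x ∈ s) :
    |iteratedDerivWithin k (truncPowDiff (k + 1) a b) s x| ≤ (k + 1).descFactorial k * |b - a| := by
  rw [iteratedDerivWithin_eq hs hx k.lt_add_one, Nat.add_sub_cancel_left, abs_mul, Nat.abs_cast]
  exact mul_le_mul_of_nonneg_left abs_one_le (Nat.cast_nonneg _)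

open Polynomial in
lemma eval_iterate_derivative {i : ℕ} (ha : a ≤ x) (hb : b ≤ x) :
    (derivative^[i] ((X - C a) ^ k - (X - C b) ^ k)).eval x =
      k.descFactorial i * truncPowDiff (k - i) a b x := by
  simp [iterate_derivative_X_sub_pow, truncPowDiff,
    truncPow.of_nonneg (sub_nonneg.2 ha), truncPow.of_nonneg (sub_nonneg.2 hb), mul_sub]

end truncPowDiff

section

open Polynomial Finset

lemma exists_natDegree_lt_and_eq_add_X_sub_C_pow_mul {R : Type*} [Field R] [CharZero R]
    {P T : R[X]} {a : R} {k n : ℕ} (hn : 0 < n) (hP : P.natDegree ≤ n) (hT : T.natDegree ≤ k + 1)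
    (h : ∀ i ≤ k, (derivative^[i] P).eval a = (derivative^[i] T).eval a) :
    ∃ Q : R[X], Q.natDegree < n ∧ P = T + (X - C a) ^ (k + 1) * Q := by
  have hdvd : (X - C a) ^ (k + 1) ∣ P - T := by
    rcases eq_or_ne (P - T) 0 with hPT | hPT
    · rw [hPT]; exact dvd_zero _
    refine (le_rootMultiplicity_iff hPT).1 (lt_rootMultiplicity_of_isRoot_iterate_derivative hPT ?_)
    intro i hi
    rw [IsRoot, iterate_derivative_sub, eval_sub, h i hi, sub_self]
  obtain ⟨Q, hQ⟩ := hdvd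
  refine ⟨Q, ?_, by rw [← hQ]; ring⟩
  rcases eq_or_ne Q 0 with rfl | hQ0
  · simpa using hn
  have hdeg := congrArg natDegree hQ
  rw [((monic_X_sub_C a).pow _).natDegree_mul' hQ0, natDegree_pow, natDegree_X_sub_C] at hdeg
  have := (natDegree_sub_le P T).trans (max_le_max hP hT)
  omega

lemma abs_eval_le_of_natDegree_lt {Q : ℝ[X]} {N : ℕ} (hQ : Q.natDegree < N) {x h B : ℝ}
    (hB : ∀ j < N, |Q.eval (x + (j + 1) * h)| ≤ B) : |Q.eval x| ≤ 2 ^ N * B := by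
  have hQ' : (Q.comp (C h * X + C x)).natDegree < N :=
    (natDegree_comp_le.trans (by grw [natDegree_linear_le]; simp)).trans_lt hQ
  have hfd := congr_fun (fwdDiff_iter_eq_zero_of_degree_lt hQ') 0
  rw [fwdDiff_iter_eq_sum_shift, sum_range_succ'] at hfd
  have hsum : ∑ j ∈ range N, (-1) ^ (N - (j + 1)) * (N.choose (j + 1) : ℝ) *
      Q.eval (x + (j + 1) * h) = -((-1) ^ N * Q.eval x) := by
    rw [eq_neg_iff_add_eq_zero]
    simp only [zsmul_eq_mul, eval_comp, eval_add, eval_mul, eval_C, eval_X, Pi.zero_apply,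
      zero_add, nsmul_eq_mul, mul_one, Nat.sub_zero, Nat.choose_zero_right] at hfd
    push_cast at hfd
    simpa only [mul_comm h, add_comm _ x, mul_one, zero_mul, add_zero] using hfd
  have hB0 : 0 ≤ B := (abs_nonneg _).trans (hB 0 (by omega))
  have hchoose : ∑ j ∈ range N, (N.choose (j + 1) : ℝ) ≤ 2 ^ N := by
    have := Nat.sum_range_choose N
    rw [sum_range_succ'] at this
    exact_mod_cast this ▸ Nat.le_add_right _ _
  calc |Q.eval x| = |∑ j ∈ range N, (-1) ^ (N - (j + 1)) * (N.choose (j + 1) : ℝ) *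
        Q.eval (x + (j + 1) * h)| := by simp [hsum, abs_mul]
    _ ≤ ∑ j ∈ range N, (N.choose (j + 1) : ℝ) * B := by
        refine (abs_sum_le_sum_abs _ _).trans (sum_le_sum fun j hj => ?_)
        rw [abs_mul, abs_mul, abs_pow, abs_neg, abs_one, one_pow, one_mul, Nat.abs_cast]
        exact mul_le_mul_of_nonneg_left (hB j (mem_range.1 hj)) (Nat.cast_nonneg _)
    _ ≤ 2 ^ N * B := by
        rw [← sum_mul]
        gcongr

lemma half_le_eval_of_eval_nonneg {k : ℕ} (hk : Even k) (hk0 : k ≠ 0) {b δ : ℝ} (hδ : 0 < δ)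
    {P Q : ℝ[X]} (hPQ : P = (X - C (b - δ)) ^ k - (X - C b) ^ k + (X - C b) ^ k * Q)
    (hpos : 0 ≤ P.eval (b - 2 * δ)) : 1 / 2 ≤ Q.eval (b - 2 * δ) := by
  -- `k` even: `T (b - 2δ) = δ^k - (2δ)^k < 0`, so positivity of `P` must come from `Q`.
  have h2k : (2 : ℝ) ≤ 2 ^ k := le_self_pow₀ one_le_two hk0
  have hval : P.eval (b - 2 * δ) = δ ^ k * (1 - 2 ^ k + 2 ^ k * Q.eval (b - 2 * δ)) := by
    simp only [hPQ, eval_add, eval_sub, eval_mul, eval_pow, eval_X, eval_C]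
    rw [show b - 2 * δ - (b - δ) = -δ by ring, show b - 2 * δ - b = -(2 * δ) by ring,
      hk.neg_pow, hk.neg_pow, mul_pow]
    ring
  rw [hval, mul_nonneg_iff_of_pos_left (pow_pos hδ k)] at hpos
  nlinarith

lemma abs_eval_le_of_eq_add_X_sub_C_pow_mul {k : ℕ} {b δ : ℝ} (hδ : 0 ≤ δ) {P Q : ℝ[X]}
    (hPQ : P = (X - C (b - δ)) ^ k - (X - C b) ^ k + (X - C b) ^ k * Q) {y m M : ℝ}
    (hy : y ≤ b - δ) (hm : 1 ≤ m * (b - y)) (hPy : |P.eval y| ≤ M) :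
    |Q.eval y| ≤ M * m ^ k + m * k * δ := by
  set u := b - y with hu
  clear_value u
  have hu0 : 0 < u := lt_of_le_of_ne (by linarith) fun h => by
    rw [← h, mul_zero] at hm; linarith
  have hT : |(y - (b - δ)) ^ k - (y - b) ^ k| ≤ δ * k * u ^ (k - 1) := by
    refine (abs_pow_sub_pow_le _ _ k).trans ?_
    rw [show y - (b - δ) - (y - b) = δ by ring, abs_of_nonneg hδ]
    gcongr
    exact max_le (by rw [abs_le]; constructor <;> linarith) (by rw [abs_le]; constructor <;> linarith)
  have hQu : |Q.eval y| * u ^ k ≤ M + δ * k * u ^ (k - 1) := by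
    have : (y - b) ^ k * Q.eval y = P.eval y - ((y - (b - δ)) ^ k - (y - b) ^ k) := by
      simp only [hPQ, eval_add, eval_sub, eval_mul, eval_pow, eval_X, eval_C]; ring
    calc |Q.eval y| * u ^ k = |(y - b) ^ k * Q.eval y| := by
          rw [abs_mul, abs_pow, abs_sub_comm, ← hu, abs_of_pos hu0, mul_comm]
      _ ≤ |P.eval y| + |(y - (b - δ)) ^ k - (y - b) ^ k| := by rw [this]; exact abs_sub _ _
      _ ≤ M + δ * k * u ^ (k - 1) := add_le_add hPy hT
  have hM : 0 ≤ M := (abs_nonneg _).trans hPy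
  refine le_of_mul_le_mul_right (hQu.trans ?_) (pow_pos hu0 k)
  rcases k with _ | k
  · simp
  · rw [Nat.add_sub_cancel]
    push_cast
    have h1 : M ≤ M * (m * u) ^ (k + 1) := le_mul_of_one_le_right hM (one_le_pow₀ hm)
    have h2 : δ * (k + 1) * u ^ k ≤ δ * (k + 1) * u ^ k * (m * u) :=
      le_mul_of_one_le_right (by positivity) hm
    have e : (M * m ^ (k + 1) + m * (k + 1) * δ) * u ^ (k + 1) =
        M * (m * u) ^ (k + 1) + δ * (k + 1) * u ^ k * (m * u) := by ring
    linarith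

lemma half_le_two_pow_mul_of_abs_eval_le {k n : ℕ} (hk : Even k) (hk0 : k ≠ 0) {b δ M : ℝ}
    (hδ : 0 < δ) {P Q : ℝ[X]}
    (hPQ : P = (X - C (b - δ)) ^ k - (X - C b) ^ k + (X - C b) ^ k * Q) (hQ : Q.natDegree < n)
    (hpos : 0 ≤ P.eval (b - 2 * δ))
    (hM : ∀ y ∈ Icc (b - 2 * δ - 1 / 2) (b - 2 * δ - 1 / (2 * n)), |P.eval y| ≤ M) :
    1 / 2 ≤ 2 ^ n * (M * (2 * n) ^ k + 2 * n * k * δ) := by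
  have hn : (0 : ℝ) < n := Nat.cast_pos.2 (by omega)
  calc 1 / 2 ≤ Q.eval (b - 2 * δ) := half_le_eval_of_eval_nonneg hk hk0 hδ hPQ hpos
    _ ≤ |Q.eval (b - 2 * δ)| := le_abs_self _
    _ ≤ 2 ^ n * (M * (2 * n) ^ k + 2 * n * k * δ) := by
      refine abs_eval_le_of_natDegree_lt (h := -1 / (2 * n)) hQ fun j hj => ?_
      have hj0 : (0 : ℝ) ≤ j := j.cast_nonneg
      have hjn : (j : ℝ) + 1 ≤ n := by exact_mod_cast hj
      rw [show b - 2 * δ + (j + 1) * (-1 / (2 * n)) = b - 2 * δ - (j + 1) / (2 * n) by ring]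
      refine abs_eval_le_of_eq_add_X_sub_C_pow_mul hδ.le hPQ ?_ ?_ (hM _ ⟨?_, ?_⟩)
      · linarith [show (0 : ℝ) ≤ (j + 1) / (2 * n) by positivity]
      · rw [show b - (b - 2 * δ - (j + 1) / (2 * n)) = 2 * δ + (j + 1) / (2 * n) by ring, mul_add,
          mul_div_cancel₀ _ (by positivity)]
        nlinarith
      · rw [sub_le_sub_iff_left, div_le_iff₀ (by positivity)]
        linarith
      · rw [sub_le_sub_iff_left]
        gcongr
        linarith

end

lemma half_le_two_pow_mul_of_abs_truncPowDiff_sub_eval_le {r n : ℕ} (hro : Odd r) (hn : 0 < n)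
    {lam δ M : ℝ} (hlam : lam ∈ Icc (0 : ℝ) 1) (hδ : 0 < δ) (hnδ : 4 * n * δ ≤ 1)
    {P : Polynomial ℝ} (hP : P.natDegree ≤ n) (hpos : ∀ x ∈ Ioo (lam - 1 / n) lam, 0 ≤ P.eval x)
    (hjet : ∀ i ≤ r, (Polynomial.derivative^[i] P).eval lam =
      iteratedDerivWithin i (truncPowDiff (r + 1) (lam - δ) lam) (Icc (-1) 1) lam)
    (hM : ∀ y ∈ Icc (-1 : ℝ) 1, |truncPowDiff (r + 1) (lam - δ) lam y - P.eval y| ≤ M) :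
    1 / 2 ≤ 2 ^ n * (M * (2 * n) ^ (r + 1) + 2 * n * (r + 1 : ℕ) * δ) := by
  obtain ⟨hlam0, hlam1⟩ := hlam
  have hn0 : (0 : ℝ) < n := Nat.cast_pos.2 hn
  have hn1 : (1 : ℝ) ≤ n := by exact_mod_cast hn
  open Polynomial in
  obtain ⟨Q, hQ, hPQ⟩ := exists_natDegree_lt_and_eq_add_X_sub_C_pow_mul
    (T := (X - C (lam - δ)) ^ (r + 1) - (X - C lam) ^ (r + 1)) hn hP (by compute_degree)
    fun i hi => by
      rw [hjet i hi, truncPowDiff.iteratedDerivWithin_eq (uniqueDiffOn_Icc (by norm_num))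
        ⟨by linarith, hlam1⟩ (by omega), truncPowDiff.eval_iterate_derivative (by linarith) le_rfl]
  refine half_le_two_pow_mul_of_abs_eval_le hro.add_one r.succ_ne_zero hδ hPQ hQ
    (hpos _ ⟨by rw [sub_lt_sub_iff_left, lt_div_iff₀ hn0]; nlinarith, by linarith⟩)
    fun y hy => ?_
  have hy' : y ≤ lam - δ := by linarith [hy.2, show 0 < 1 / (2 * (n : ℝ)) by positivity]
  have hf0 : truncPowDiff (r + 1) (lam - δ) lam y = 0 :=
    truncPowDiff.eq_zero r.succ_ne_zero hy' (by linarith)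
  simpa [hf0] using hM y ⟨by nlinarith [hy.1], by linarith⟩

/-- Copositive approximation with interpolatory constraints, negative result for
`f ∈ C^r` with odd `r ≥ 1`: for any `n ≥ r`, `A > 0` and `λ ∈ [0,1]`, there is
`f ∈ C^r[-1,1]`, vanishing on `[-1,-1/2]` and nonnegative on `[-1,1]`, such that any
polynomial of degree ≤ n, nonnegative on `(λ - 1/n, λ)`, with
`P_n^{(i)}(λ) = f^{(i)}(λ)` for `0 ≤ i ≤ r`, satisfies `‖f - P_n‖ > A ‖f^{(r)}‖`. -/
theorem statement13 (r : ℕ) (hr : 1 ≤ r) (hro : Odd r) (n : ℕ) (hn : r ≤ n)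
    (A : ℝ) (hA : 0 < A) (lam : ℝ) (hlam : lam ∈ Set.Icc (0 : ℝ) 1) :
    ∃ f : ℝ → ℝ, ContDiffOn ℝ r f (Set.Icc (-1 : ℝ) 1) ∧
      (∀ x ∈ Set.Icc (-1 : ℝ) (-1/2 : ℝ), f x = 0) ∧
      (∀ x ∈ Set.Icc (-1 : ℝ) 1, 0 ≤ f x) ∧
      ∀ P : Polynomial ℝ, P.natDegree ≤ n →
        (∀ x ∈ Set.Ioo (lam - 1 / n) lam, 0 ≤ P.eval x) →
        (∀ i : ℕ, i ≤ r → (Polynomial.derivative^[i] P).eval lam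
            = iteratedDerivWithin i f (Set.Icc (-1 : ℝ) 1) lam) →
        A * supNorm (iteratedDerivWithin r f (Set.Icc (-1 : ℝ) 1)) (-1) 1
          < supNorm (fun x => f x - P.eval x) (-1) 1 := by
  have hn1 : (1 : ℝ) ≤ n := by exact_mod_cast (show 1 ≤ n by omega)
  set D : ℝ := ↑((r + 1).descFactorial r)
  set L : ℝ := 2 ^ n * (A * D * (2 * n) ^ (r + 1) + 2 * n * (r + 1))
  -- `4nδ ≤ 1` keeps the sample points inside `[-1, λ - δ]`; `L δ < 1/2` is the contradiction.
  obtain ⟨c, hc, hcL⟩ := exists_pos_mul_lt one_half_pos L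
  set δ : ℝ := min (1 / (4 * n)) c
  have hδ : 0 < δ := lt_min (by positivity) hc
  have hnδ : 4 * n * δ ≤ 1 := by
    have := min_le_left (1 / (4 * (n : ℝ))) c
    rwa [le_div_iff₀ (by positivity), mul_comm] at this
  have hI : UniqueDiffOn ℝ (Icc (-1 : ℝ) 1) := uniqueDiffOn_Icc (by norm_num)
  set f := truncPowDiff (r + 1) (lam - δ) lam
  refine ⟨f, (truncPowDiff.contDiff r.lt_add_one).contDiffOn, fun x hx => ?_,
    fun x _ => truncPowDiff.nonneg (by linarith), fun P hP hpos hjet => ?_⟩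
  · exact truncPowDiff.eq_zero r.succ_ne_zero (by nlinarith [hx.2, hlam.1])
      (by linarith [hx.2, hlam.1])
  by_contra! hle
  have hfr : supNorm (iteratedDerivWithin r f (Icc (-1) 1)) (-1) 1 ≤ D * δ :=
    supNorm_le (by positivity) fun x hx => (truncPowDiff.abs_iteratedDerivWithin_le hI hx).trans_eq
      (by rw [sub_sub_cancel, abs_of_pos hδ])
  have hM : ∀ y ∈ Icc (-1 : ℝ) 1, |f y - P.eval y| ≤ A * (D * δ) := fun y hy =>
    (abs_le_supNorm ((truncPowDiff.contDiff r.lt_add_one).continuous.sub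
      P.continuous).continuousOn hy).trans (hle.trans (mul_le_mul_of_nonneg_left hfr hA.le))
  have key := half_le_two_pow_mul_of_abs_truncPowDiff_sub_eval_le hro (by omega) hlam hδ hnδ hP
    hpos hjet hM
  have : L * δ ≤ L * c := mul_le_mul_of_nonneg_left (min_le_right _ _) (by positivity)
  have e : 2 ^ n * (A * (D * δ) * (2 * n) ^ (r + 1) + 2 * n * ((r + 1 : ℕ) : ℝ) * δ) = L * δ := by
    push_cast; ring
  linarith
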